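/- Let A be a configuration on level n+1 and A_j its restriction to the subtree of the j-th child u_j of the root, and write g_j = P(σ_{u_j}=1 | states of the subtree of u_j at level n+1 equal A_j) (which equals f_n(1, A_j) by the recursive tree structure). Then f_{n+1}(1, A) = N1/(N1 + N2), where N1 = π1·∏_{j=1}^d [1 + (θ/π1)(g_j − π1)] and N2 = π2·∏_{j=1}^d [1 − (θ/π2)(g_j − π1)]. -/

import Mathlib

open Finset Filter

namespace AsymIsing

/-- Level-`k` vertices of the rooted `d`-ary tree: paths of length `k` from the root. -/
abbrev Vert (d k : ℕ) : Type := Fin k → Fin d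

/-- A spin configuration on levels `0, …, n` of the `d`-ary tree. -/
abbrev Conf (d n : ℕ) : Type := ∀ k : Fin (n + 1), Vert d k → Fin 2

/-- A spin configuration on level `n` only. -/
abbrev LConf (d n : ℕ) : Type := Vert d n → Fin 2

/-- The transition matrix of the asymmetric binary channel; the paper's state `1`
corresponds to the index `0` and the state `2` to the index `1`. -/
noncomputable def Mmat (θ Δ : ℝ) : Fin 2 → Fin 2 → ℝ := fun i j =>
  if i = 0 then (if j = 0 then (1 + θ - Δ) / 2 else (1 - θ + Δ) / 2)
  else (if j = 0 then (1 - θ - Δ) / 2 else (1 + θ + Δ) / 2)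

/-- The stationary distribution `π = (π₁, π₂)` of the channel. -/
noncomputable def pst (θ Δ : ℝ) : Fin 2 → ℝ := fun i =>
  if i = 0 then 1 / 2 - Δ / (2 * (1 - θ)) else 1 / 2 + Δ / (2 * (1 - θ))

/-- The root spin of a configuration. -/
def root {d n : ℕ} (σ : Conf d n) : Fin 2 := σ ⟨0, n.succ_pos⟩ (fun i => i.elim0)

/-- The restriction of a configuration to the last (`n`-th) level. -/
def top {d n : ℕ} (σ : Conf d n) : LConf d n := σ (Fin.last n)

/-- The probability of a full configuration on levels `0, …, n` under the broadcast
process: the root is drawn from `π` and spins propagate along edges via `M`. -/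
noncomputable def confProb (d : ℕ) (θ Δ : ℝ) (n : ℕ) (σ : Conf d n) : ℝ :=
  pst θ Δ (root σ) *
    ∏ k : Fin n, ∏ v : Vert d (k + 1),
      Mmat θ Δ (σ k.castSucc (v ∘ Fin.castSucc)) (σ k.succ v)

/-- `P(σ(n) = A)`: the marginal law of the level-`n` spins. -/
noncomputable def levelProb (d : ℕ) (θ Δ : ℝ) (n : ℕ) (A : LConf d n) : ℝ :=
  ∑ σ : Conf d n, if top σ = A then confProb d θ Δ n σ else 0

/-- `P(σ_ρ = i, σ(n) = A)`. -/
noncomputable def jointProb (d : ℕ) (θ Δ : ℝ) (n : ℕ) (i : Fin 2) (A : LConf d n) : ℝ :=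
  ∑ σ : Conf d n, if root σ = i ∧ top σ = A then confProb d θ Δ n σ else 0

/-- The posterior `f_n(i, A) = P(σ_ρ = i ∣ σ(n) = A)`. -/
noncomputable def post (d : ℕ) (θ Δ : ℝ) (n : ℕ) (i : Fin 2) (A : LConf d n) : ℝ :=
  jointProb d θ Δ n i A / levelProb d θ Δ n A

/-- The law of `σ^i(n)`, i.e. `P(σ(n) = A ∣ σ_ρ = i)`. -/
noncomputable def condLevel (d : ℕ) (θ Δ : ℝ) (n : ℕ) (i : Fin 2) (A : LConf d n) : ℝ :=
  jointProb d θ Δ n i A / pst θ Δ i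

/-- The total variation distance between `σ^1(n)` and `σ^2(n)`. -/
noncomputable def tvDist (d : ℕ) (θ Δ : ℝ) (n : ℕ) : ℝ :=
  (1 / 2) * ∑ A : LConf d n, |condLevel d θ Δ n 0 A - condLevel d θ Δ n 1 A|

/-- The reconstruction problem is solvable if `limsup_n d_TV(σ^1(n), σ^2(n)) > 0`. -/
def solvable (d : ℕ) (θ Δ : ℝ) : Prop :=
  0 < Filter.limsup (fun n => tvDist d θ Δ n) Filter.atTop

/-- Non-reconstruction: `limsup_n d_TV(σ^1(n), σ^2(n)) = 0`. -/
def nonReconstruction (d : ℕ) (θ Δ : ℝ) : Prop :=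
  Filter.limsup (fun n => tvDist d θ Δ n) Filter.atTop = 0

/-- Expectation of a function of the level-`n` configuration, conditioned on `σ_ρ = 1`. -/
noncomputable def expect1 (d : ℕ) (θ Δ : ℝ) (n : ℕ) (g : LConf d n → ℝ) : ℝ :=
  ∑ A : LConf d n, condLevel d θ Δ n 0 A * g A

/-- `x_n = E f_n(1, σ^1(n)) − π₁`. -/
noncomputable def xseq (d : ℕ) (θ Δ : ℝ) (n : ℕ) : ℝ :=
  expect1 d θ Δ n (fun A => post d θ Δ n 0 A) - pst θ Δ 0

/-- `z_n = E (f_n(1, σ^1(n)) − π₁)²`. -/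
noncomputable def zseq (d : ℕ) (θ Δ : ℝ) (n : ℕ) : ℝ :=
  expect1 d θ Δ n (fun A => (post d θ Δ n 0 A - pst θ Δ 0) ^ 2)

/-- The restriction of a level-`(n+1)` configuration to the subtree of the `j`-th
child of the root (paths starting with `j`). -/
def restrictChild {d n : ℕ} (j : Fin d) (A : LConf d (n + 1)) : LConf d n :=
  fun w => A (Fin.cons j w)

/-- `Y_j = f_n(1, σ_j(n+1))`, as a function of the level-`(n+1)` configuration. -/
noncomputable def Yfun (d : ℕ) (θ Δ : ℝ) (n : ℕ) (j : Fin d) (A : LConf d (n + 1)) : ℝ :=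
  post d θ Δ n 0 (restrictChild j A)

/-- `Z₁ = ∏_j (1 + (θ/π₁)(Y_j − π₁))`, as a function of the level-`(n+1)` configuration. -/
noncomputable def Z1fun (d : ℕ) (θ Δ : ℝ) (n : ℕ) (A : LConf d (n + 1)) : ℝ :=
  ∏ j : Fin d, (1 + (θ / pst θ Δ 0) * (Yfun d θ Δ n j A - pst θ Δ 0))

/-- `Z₂ = ∏_j (1 − (θ/π₂)(Y_j − π₁))`, as a function of the level-`(n+1)` configuration. -/
noncomputable def Z2fun (d : ℕ) (θ Δ : ℝ) (n : ℕ) (A : LConf d (n + 1)) : ℝ :=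
  ∏ j : Fin d, (1 - (θ / pst θ Δ 1) * (Yfun d θ Δ n j A - pst θ Δ 0))

/-- The value of `Δ` making `π = (π₁, π₂)` the stationary distribution of the channel
with second eigenvalue `θ`, namely `Δ = (1 − θ)(π₂ − π₁)`. -/
noncomputable def Dlt (θ π1 π2 : ℝ) : ℝ := (1 - θ) * (π2 - π1)

/-- The Gaussian-approximation function
`f(s) = E[π₁ e^{sμ₁+√s W₁} / (π₁ e^{sμ₁+√s W₁} + π₂ e^{sμ₂+√s W₂})] − π₁`,
where `μ₁ = 1/(2π₁)`, `μ₂ = −(1+π₂)/(2π₂²)`, `W₁ ∼ N(0, 1/π₁)` (realized as `w/√π₁`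
for `w` standard Gaussian) and `W₂ = −(π₁/π₂)·W₁`. -/
noncomputable def gfun (π1 π2 : ℝ) (s : ℝ) : ℝ :=
  (∫ w : ℝ,
      (π1 * Real.exp (s * (1 / (2 * π1)) + Real.sqrt s * (w / Real.sqrt π1))) /
        (π1 * Real.exp (s * (1 / (2 * π1)) + Real.sqrt s * (w / Real.sqrt π1)) +
          π2 * Real.exp (s * (-(1 + π2) / (2 * π2 ^ 2)) +
            Real.sqrt s * (-(π1 / π2) * (w / Real.sqrt π1))))
    ∂(ProbabilityTheory.gaussianReal 0 1)) - π1

/-!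
Given the root spin `i`, the `d` subtrees below the children of the root are independent, and the
child `u_j` has spin `c` with probability `M i c`; hence
`P(σ_ρ = i, σ(n+1) = A) = π_i ∏_j ∑_c M i c · P(σ(n) = A_j | σ_ρ = c)`.
The channel decomposes as `M = 1π + θ(I − 1π)`, so the `j`-th factor is
`(1 − θ) P(A_j) + θ P(A_j | σ_ρ = i) = P(A_j) (1 + (θ/π_i)(f_n(i, A_j) − π_i))`,
and `f_n(2, A_j) − π₂ = −(f_n(1, A_j) − π₁)`. The common factor `∏_j P(A_j)` cancels in the
posterior.
-/

section Channel

variable {θ Δ : ℝ}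

lemma one_sub_eq_Mmat_add (θ Δ : ℝ) : 1 - θ = Mmat θ Δ 1 0 + Mmat θ Δ 0 1 := by
  simp only [Mmat]
  norm_num
  ring

lemma one_sub_pos (hM : ∀ i j, 0 < Mmat θ Δ i j) : 0 < 1 - θ := by
  rw [one_sub_eq_Mmat_add θ Δ]
  exact add_pos (hM 1 0) (hM 0 1)

lemma pst_eq_Mmat_div (hθ : 1 - θ ≠ 0) :
    pst θ Δ = ![Mmat θ Δ 1 0 / (1 - θ), Mmat θ Δ 0 1 / (1 - θ)] := by
  funext c
  fin_cases c <;> simp [pst, Mmat] <;> field_simp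

lemma pst_pos (hM : ∀ i j, 0 < Mmat θ Δ i j) (c : Fin 2) : 0 < pst θ Δ c := by
  have h := one_sub_pos hM
  rw [pst_eq_Mmat_div h.ne']
  fin_cases c <;> simp only [Fin.zero_eta, Fin.mk_one, Matrix.cons_val] <;> exact div_pos (hM _ _) h

lemma pst_zero_add_pst_one (θ Δ : ℝ) : pst θ Δ 0 + pst θ Δ 1 = 1 := by
  simp only [pst]
  norm_num

lemma Mmat_eq_pst_add (hθ : 1 - θ ≠ 0) (i c : Fin 2) :
    Mmat θ Δ i c = pst θ Δ c + θ * ((if i = c then 1 else 0) - pst θ Δ c) := by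
  fin_cases i <;> fin_cases c <;> simp [Mmat, pst] <;> field_simp <;> ring

end Channel

section Tree

variable {d n : ℕ}

-- `v 0` is the child of the root above the vertex `v`, and `Fin.tail v` the path below it.
def glue (i : Fin 2) (τ : Fin d → Conf d n) : Conf d (n + 1) :=
  Fin.cases (motive := fun k : Fin (n + 2) => Vert d k → Fin 2) (fun _ => i)
    (fun (k : Fin (n + 1)) (v : Fin (k + 1) → Fin d) => τ (v 0) k (Fin.tail v))

@[simp]
lemma root_glue (i : Fin 2) (τ : Fin d → Conf d n) : root (glue i τ) = i := rfl

@[simp]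
lemma glue_succ (i : Fin 2) (τ : Fin d → Conf d n) (k : Fin (n + 1)) (v : Vert d (k + 1)) :
    glue i τ k.succ v = τ (v 0) k (Fin.tail v) :=
  congrFun (Fin.cases_succ (motive := fun k : Fin (n + 2) => Vert d k → Fin 2) (i := k)) v

lemma apply_zero_eq_root (σ : Conf d n) (v : Vert d (0 : Fin (n + 1))) : σ 0 v = root σ := by
  rw [root, show v = (fun i => i.elim0) from funext fun i => i.elim0]
  rfl

def childConf (σ : Conf d (n + 1)) (j : Fin d) : Conf d n :=
  fun k w => σ k.succ (Fin.cons j w)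

def rootChildEquiv : Conf d (n + 1) ≃ Fin 2 × (Fin d → Conf d n) where
  toFun σ := (root σ, childConf σ)
  invFun p := glue p.1 p.2
  left_inv σ := by
    funext k v
    induction k using Fin.cases with
    | zero => exact (apply_zero_eq_root σ v).symm
    | succ k => simp [childConf]
  right_inv p := by
    ext j k w <;> simp [childConf]

lemma top_glue_eq_iff (i : Fin 2) (τ : Fin d → Conf d n) (A : LConf d (n + 1)) :
    top (glue i τ) = A ↔ ∀ j, top (τ j) = restrictChild j A := by
  rw [funext_iff, Fin.forall_fin_succ_pi, forall_congr' fun j => funext_iff.symm]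
  rfl

noncomputable def edgeWeight (θ Δ : ℝ) (σ : Conf d n) : ℝ :=
  ∏ k : Fin n, ∏ v : Vert d (k + 1), Mmat θ Δ (σ k.castSucc (v ∘ Fin.castSucc)) (σ k.succ v)

lemma confProb_eq (θ Δ : ℝ) (σ : Conf d n) :
    confProb d θ Δ n σ = pst θ Δ (root σ) * edgeWeight θ Δ σ := rfl

lemma prod_Mmat_glue_zero (θ Δ : ℝ) (i : Fin 2) (τ : Fin d → Conf d n) :
    ∏ v : Vert d ((0 : Fin (n + 1)) + 1),
        Mmat θ Δ (glue i τ (0 : Fin (n + 1)).castSucc (v ∘ Fin.castSucc))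
          (glue i τ (0 : Fin (n + 1)).succ v) =
      ∏ j, Mmat θ Δ i (root (τ j)) := by
  refine Fintype.prod_equiv (Equiv.funUnique (Fin 1) (Fin d)) _ _ fun v => ?_
  exact congrArg₂ (Mmat θ Δ) rfl ((glue_succ i τ 0 v).trans (apply_zero_eq_root _ _))

lemma edgeWeight_glue (θ Δ : ℝ) (i : Fin 2) (τ : Fin d → Conf d n) :
    edgeWeight θ Δ (glue i τ) = ∏ j, Mmat θ Δ i (root (τ j)) * edgeWeight θ Δ (τ j) := by
  rw [edgeWeight, Fin.prod_univ_succ, prod_mul_distrib, prod_Mmat_glue_zero]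
  congr 1
  simp only [edgeWeight]
  rw [← Finset.prod_comm]
  refine prod_congr rfl fun k _ => ?_
  refine (Fintype.prod_equiv (Fin.consEquiv fun _ => Fin d).symm _
    (fun p : Fin d × Vert d (k + 1) =>
      Mmat θ Δ (τ p.1 k.castSucc (p.2 ∘ Fin.castSucc)) (τ p.1 k.succ p.2))
    fun v => rfl).trans (Fintype.prod_prod_type _)

lemma condLevel_eq_sum_edgeWeight {θ Δ : ℝ} {c : Fin 2} (hp : pst θ Δ c ≠ 0) (B : LConf d n) :
    condLevel d θ Δ n c B = ∑ σ, if root σ = c ∧ top σ = B then edgeWeight θ Δ σ else 0 := by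
  rw [condLevel, jointProb, sum_div]
  refine sum_congr rfl fun σ _ => ?_
  split_ifs with h
  · rw [confProb_eq, h.1, mul_div_cancel_left₀ _ hp]
  · exact zero_div _

lemma sum_Mmat_mul_condLevel_eq_sum_edgeWeight {θ Δ : ℝ} (hp : ∀ c, pst θ Δ c ≠ 0) (i : Fin 2)
    (B : LConf d n) :
    ∑ c, Mmat θ Δ i c * condLevel d θ Δ n c B =
      ∑ σ, if top σ = B then Mmat θ Δ i (root σ) * edgeWeight θ Δ σ else 0 := by
  simp_rw [condLevel_eq_sum_edgeWeight (hp _), mul_sum]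
  rw [sum_comm]
  refine sum_congr rfl fun σ _ => ?_
  by_cases h : top σ = B <;> simp [h]

lemma jointProb_succ {θ Δ : ℝ} (hp : ∀ c, pst θ Δ c ≠ 0) (i : Fin 2) (A : LConf d (n + 1)) :
    jointProb d θ Δ (n + 1) i A =
      pst θ Δ i * ∏ j, ∑ c, Mmat θ Δ i c * condLevel d θ Δ n c (restrictChild j A) := by
  simp_rw [sum_Mmat_mul_condLevel_eq_sum_edgeWeight hp, Fintype.prod_sum, mul_sum]
  rw [jointProb, ← rootChildEquiv.symm.sum_comp, Fintype.sum_prod_type,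
    Fintype.sum_eq_single i fun c hc => sum_eq_zero fun τ _ => if_neg fun h => hc h.1]
  refine sum_congr rfl fun τ _ => ?_
  simp only [rootChildEquiv, Equiv.coe_fn_symm_mk, root_glue, true_and, top_glue_eq_iff,
    confProb_eq, edgeWeight_glue, Fintype.prod_ite_zero, mul_ite, mul_zero]

end Tree

section Posterior

variable {d n : ℕ} {θ Δ : ℝ}

lemma levelProb_eq_sum_jointProb (B : LConf d n) :
    levelProb d θ Δ n B = ∑ c, jointProb d θ Δ n c B := by
  simp only [levelProb, jointProb]
  rw [sum_comm]
  refine sum_congr rfl fun σ _ => ?_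
  by_cases h : top σ = B <;> simp [h]

lemma confProb_pos (hM : ∀ i j, 0 < Mmat θ Δ i j) (σ : Conf d n) : 0 < confProb d θ Δ n σ :=
  mul_pos (pst_pos hM _) (prod_pos fun _ _ => prod_pos fun _ _ => hM _ _)

lemma top_surjective : Function.Surjective (top : Conf d n → LConf d n) :=
  fun B => ⟨Function.update (fun _ _ => 0) (Fin.last n) B, Function.update_self _ _ _⟩

lemma levelProb_pos (hM : ∀ i j, 0 < Mmat θ Δ i j) (B : LConf d n) : 0 < levelProb d θ Δ n B := by
  obtain ⟨σ, hσ⟩ := top_surjective B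
  refine sum_pos' (fun τ _ => ?_) ⟨σ, mem_univ _, ?_⟩
  · split_ifs
    exacts [(confProb_pos hM τ).le, le_rfl]
  · rw [if_pos hσ]
    exact confProb_pos hM σ

lemma sum_Mmat_mul_condLevel (hθ : 1 - θ ≠ 0) (hp : ∀ c, pst θ Δ c ≠ 0) (i : Fin 2)
    (B : LConf d n) :
    ∑ c, Mmat θ Δ i c * condLevel d θ Δ n c B =
      (1 - θ) * levelProb d θ Δ n B + θ * condLevel d θ Δ n i B := by
  have hjoint : ∀ c, jointProb d θ Δ n c B = pst θ Δ c * condLevel d θ Δ n c B :=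
    fun c => (mul_div_cancel₀ _ (hp c)).symm
  simp only [levelProb_eq_sum_jointProb, hjoint, Mmat_eq_pst_add hθ, Fin.sum_univ_two]
  fin_cases i <;> simp <;> ring

lemma sum_Mmat_zero_mul_condLevel (hM : ∀ i j, 0 < Mmat θ Δ i j) (B : LConf d n) :
    ∑ c, Mmat θ Δ 0 c * condLevel d θ Δ n c B =
      levelProb d θ Δ n B * (1 + θ / pst θ Δ 0 * (post d θ Δ n 0 B - pst θ Δ 0)) := by
  have hL := (levelProb_pos hM B).ne'
  have hp := (pst_pos hM 0).ne'
  rw [sum_Mmat_mul_condLevel (one_sub_pos hM).ne' (fun c => (pst_pos hM c).ne'), post, condLevel]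
  field_simp
  ring

lemma sum_Mmat_one_mul_condLevel (hM : ∀ i j, 0 < Mmat θ Δ i j) (B : LConf d n) :
    ∑ c, Mmat θ Δ 1 c * condLevel d θ Δ n c B =
      levelProb d θ Δ n B * (1 - θ / pst θ Δ 1 * (post d θ Δ n 0 B - pst θ Δ 0)) := by
  have hL := (levelProb_pos hM B).ne'
  have hp := (pst_pos hM 1).ne'
  have hjoint : jointProb d θ Δ n 1 B = levelProb d θ Δ n B - jointProb d θ Δ n 0 B := by
    rw [levelProb_eq_sum_jointProb, Fin.sum_univ_two]
    ring
  rw [sum_Mmat_mul_condLevel (one_sub_pos hM).ne' (fun c => (pst_pos hM c).ne'), post, condLevel,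
    hjoint]
  field_simp
  linear_combination -θ * levelProb d θ Δ n B * pst_zero_add_pst_one θ Δ

end Posterior

theorem post_recursion_general (d : ℕ) (θ Δ : ℝ) (hM : ∀ i j, 0 < Mmat θ Δ i j) :
    ∀ (n : ℕ) (A : LConf d (n + 1)),
      post d θ Δ (n + 1) 0 A =
        (pst θ Δ 0 * ∏ j : Fin d,
            (1 + (θ / pst θ Δ 0) * (post d θ Δ n 0 (restrictChild j A) - pst θ Δ 0))) /
          (pst θ Δ 0 * ∏ j : Fin d,
              (1 + (θ / pst θ Δ 0) * (post d θ Δ n 0 (restrictChild j A) - pst θ Δ 0)) +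
            pst θ Δ 1 * ∏ j : Fin d,
              (1 - (θ / pst θ Δ 1) * (post d θ Δ n 0 (restrictChild j A) - pst θ Δ 0))) := by
  intro n A
  have hp : ∀ c, pst θ Δ c ≠ 0 := fun c => (pst_pos hM c).ne'
  have hL : ∏ j, levelProb d θ Δ n (restrictChild j A) ≠ 0 :=
    prod_ne_zero_iff.2 fun j _ => (levelProb_pos hM _).ne'
  rw [post, levelProb_eq_sum_jointProb, Fin.sum_univ_two, jointProb_succ hp, jointProb_succ hp]
  simp only [sum_Mmat_zero_mul_condLevel hM, sum_Mmat_one_mul_condLevel hM, prod_mul_distrib]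
  rw [mul_left_comm, mul_left_comm (pst θ Δ 1), ← mul_add, mul_div_mul_left _ _ hL]

/-- Recursive formula for the posterior: for any level-`(n+1)`
configuration `A`, with `g_j = f_n(1, A_j)` the posterior of the `j`-th child from its
subtree, `f_{n+1}(1, A) = N₁/(N₁ + N₂)` where
`N₁ = π₁·∏_j (1 + (θ/π₁)(g_j − π₁))` and `N₂ = π₂·∏_j (1 − (θ/π₂)(g_j − π₁))`. -/
theorem post_recursion (d : ℕ) (hd : 2 ≤ d) (θ Δ : ℝ) (hθ0 : θ ≠ 0) (hθ1 : |θ| < 1)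
    (hθΔ : |θ| + |Δ| ≤ 1) (hM : ∀ i j, 0 < Mmat θ Δ i j)
    (hord : pst θ Δ 1 ≤ pst θ Δ 0) :
    ∀ (n : ℕ) (A : LConf d (n + 1)),
      post d θ Δ (n + 1) 0 A =
        (pst θ Δ 0 * ∏ j : Fin d,
            (1 + (θ / pst θ Δ 0) * (post d θ Δ n 0 (restrictChild j A) - pst θ Δ 0))) /
          (pst θ Δ 0 * ∏ j : Fin d,
              (1 + (θ / pst θ Δ 0) * (post d θ Δ n 0 (restrictChild j A) - pst θ Δ 0)) +
            pst θ Δ 1 * ∏ j : Fin d,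
              (1 - (θ / pst θ Δ 1) * (post d θ Δ n 0 (restrictChild j A) - pst θ Δ 0))) :=
  post_recursion_general d θ Δ hM

end AsymIsing
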